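/- For any binary word X, N_{10}(X)^2 = 2·N_{1010}(X) + 4·N_{1100}(X) + 2·N_{110}(X) + 2·N_{100}(X) + N_{10}(X). -/

import Mathlib

/-! Induction on `X` with the letter prepended: `N_{bw}(cX) = N_{bw}(X) + [b = c] N_w(X)`.
Prepending `a` turns `N_{ab}` into `N_{ab} + N_b`, so the square acquires the cross term
`2 N_{ab} N_b` and the square `N_b ^ 2`; both are themselves linear combinations of subword
counts, proved by the same induction, after which each step is a polynomial identity. -/

def patCount (w X : List Bool) : ℕ := X.sublists.count w

theorem patCount_cons (a b : Bool) (w X : List Bool) :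
    patCount (b :: w) (a :: X)
      = patCount (b :: w) X + if b = a then patCount w X else 0 := by
  rw [patCount, (List.sublists_cons_perm_append a X).count_eq, List.count_append]
  congr 1
  split_ifs with h
  · subst h
    exact List.count_map_of_injective _ _ List.cons_injective _
  · exact List.count_eq_zero.2 fun hw => by
      obtain ⟨v, -, hv⟩ := List.mem_map.1 hw
      exact h (List.cons_eq_cons.1 hv).1.symm

theorem patCount_nil (X : List Bool) : patCount [] X = 1 := by
  induction X with
  | nil => rfl
  | cons a X ih =>
    rw [patCount, (List.sublists_cons_perm_append a X).count_eq, List.count_append,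
      ← patCount, ih, List.count_eq_zero.2 (by simp)]

theorem patCount_singleton_sq (b : Bool) (X : List Bool) :
    patCount [b] X ^ 2 = 2 * patCount [b, b] X + patCount [b] X := by
  induction X with
  | nil => simp [patCount]
  | cons c X ih =>
    simp only [patCount_cons, patCount_nil]
    split_ifs <;> grind

theorem patCount_pair_mul_singleton {a b : Bool} (hab : a ≠ b) (X : List Bool) :
    patCount [a, b] X * patCount [b] X
      = patCount [b, a, b] X + 2 * patCount [a, b, b] X + patCount [a, b] X := by
  induction X with
  | nil => simp [patCount]
  | cons c X ih =>
    simp only [patCount_cons, patCount_nil]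
    split_ifs <;> grind [patCount_singleton_sq]

theorem patCount_pair_sq {a b : Bool} (hab : a ≠ b) (X : List Bool) :
    patCount [a, b] X ^ 2
      = 2 * patCount [a, b, a, b] X + 4 * patCount [a, a, b, b] X
        + 2 * patCount [a, a, b] X + 2 * patCount [a, b, b] X + patCount [a, b] X := by
  induction X with
  | nil => simp [patCount]
  | cons c X ih =>
    simp only [patCount_cons]
    split_ifs <;> grind [patCount_singleton_sq, patCount_pair_mul_singleton hab]

theorem N10_sq (X : List Bool) :
    patCount [true, false] X ^ 2
      = 2 * patCount [true, false, true, false] X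
        + 4 * patCount [true, true, false, false] X
        + 2 * patCount [true, true, false] X
        + 2 * patCount [true, false, false] X
        + patCount [true, false] X :=
  patCount_pair_sq (by decide) X
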